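/- arXiv:1804.09019 — 2 statements merged into one kernel-verified Lean document; each statement's English description precedes it below -/
import Mathlib

section
/- A finite simple graph is chordal if and only if every cycle of length greater than 3 has an induced 1-chord triangle, i.e., contains three consecutive vertices of the cycle whose first and third vertices are joined by a chord, forming a triangle with exactly one chord of the cycle. -/
/-- A cycle of length `n` in `G`, given as an injective map from `ZMod n`
whose consecutive images are adjacent. -/
def SimpleGraph.IsCycleEmb {V : Type*} (G : SimpleGraph V) {n : ℕ} (f : ZMod n → V) : Prop :=
  Function.Injective f ∧ ∀ i : ZMod n, G.Adj (f i) (f (i + 1))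

/-- A chord of the cycle `f`: an edge of `G` joining two non-consecutive
vertices of the cycle. -/
def SimpleGraph.IsChordOf {V : Type*} (G : SimpleGraph V) {n : ℕ} (f : ZMod n → V)
    (i j : ZMod n) : Prop :=
  G.Adj (f i) (f j) ∧ j ≠ i + 1 ∧ i ≠ j + 1

/-- A graph is chordal if every cycle of length at least 4 has a chord,
i.e. it has no chordless cycle of size 4 or more. -/
def SimpleGraph.Chordal {V : Type*} (G : SimpleGraph V) : Prop :=
  ∀ (n : ℕ), 4 ≤ n → ∀ f : ZMod n → V, G.IsCycleEmb f → ∃ i j, G.IsChordOf f i j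

/-- A strong chord of the (even) cycle `f`: a chord joining two vertices whose
distance apart along the cycle is odd. -/
def SimpleGraph.IsStrongChordOf {V : Type*} (G : SimpleGraph V) {n : ℕ} (f : ZMod n → V)
    (i j : ZMod n) : Prop :=
  G.IsChordOf f i j ∧ Odd (j - i).val

/-- A graph is strongly chordal if it is chordal and every even cycle of length
at least 6 has a strong chord. -/
def SimpleGraph.StronglyChordal {V : Type*} (G : SimpleGraph V) : Prop :=
  G.Chordal ∧ ∀ (n : ℕ), 6 ≤ n → Even n → ∀ f : ZMod n → V, G.IsCycleEmb f →
    ∃ i j, G.IsStrongChordOf f i j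

/-- The closed neighborhood `N[v]` of a vertex `v`. -/
def SimpleGraph.closedNbhd {V : Type*} (G : SimpleGraph V) (v : V) : Set V :=
  insert v (G.neighborSet v)

/-- A vertex is simplicial if its open neighborhood induces a clique. -/
def SimpleGraph.IsSimplicialVertex {V : Type*} (G : SimpleGraph V) (v : V) : Prop :=
  ∀ u w, G.Adj v u → G.Adj v w → u ≠ w → G.Adj u w

/-- A vertex is simple if the vertices in its closed neighborhood are pairwise
compatible, i.e. their closed neighborhoods are linearly ordered by inclusion. -/
def SimpleGraph.IsSimpleVertex {V : Type*} (G : SimpleGraph V) (v : V) : Prop :=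
  ∀ u w, u ∈ G.closedNbhd v → w ∈ G.closedNbhd v →
    G.closedNbhd u ⊆ G.closedNbhd w ∨ G.closedNbhd w ⊆ G.closedNbhd u

/-- A perfect elimination ordering: each `σ i` is simplicial in the subgraph of `G`
induced by the vertex set `{σ j : i ≤ j}`. -/
def SimpleGraph.IsPerfectElimOrdering {V : Type*} [Fintype V] (G : SimpleGraph V)
    (σ : Fin (Fintype.card V) ≃ V) : Prop :=
  ∀ i : Fin (Fintype.card V),
    (G.induce (σ '' {j | i ≤ j})).IsSimplicialVertex ⟨σ i, ⟨i, le_refl i, rfl⟩⟩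

/-- A strong elimination ordering: for all `i < j` and `k < l`, if
`σ k, σ l ∈ N[σ i]` and `σ k ∈ N[σ j]`, then `σ l ∈ N[σ j]`. -/
def SimpleGraph.IsStrongElimOrdering {V : Type*} [Fintype V] (G : SimpleGraph V)
    (σ : Fin (Fintype.card V) ≃ V) : Prop :=
  ∀ i j k l : Fin (Fintype.card V), i < j → k < l →
    σ k ∈ G.closedNbhd (σ i) → σ l ∈ G.closedNbhd (σ i) →
    σ k ∈ G.closedNbhd (σ j) → σ l ∈ G.closedNbhd (σ j)

/-!
Take a chord `(f i, f (i + d))` of the cycle with `d` minimal. If `d = 2` it closes a 1-chord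
triangle. Otherwise the arc `f i, …, f (i + d)`, closed up by this chord, is a cycle of length
`d + 1 ≥ 4`; by chordality it has a chord, and that chord is a chord of the original cycle
spanning fewer than `d` steps, contradicting minimality.
-/

theorem ZMod.natCast_eq_natCast_iff_of_lt {n a b : ℕ} (ha : a < n) (hb : b < n) :
    (a : ZMod n) = b ↔ a = b := by
  refine ⟨fun h => ?_, congrArg _⟩
  simpa only [ZMod.val_cast_of_lt ha, ZMod.val_cast_of_lt hb] using congrArg ZMod.val h

namespace SimpleGraph

variable {V : Type*} {G : SimpleGraph V} {n : ℕ} {f : ZMod n → V}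

theorem IsChordOf.symm {i j : ZMod n} (h : G.IsChordOf f i j) : G.IsChordOf f j i :=
  ⟨h.1.symm, h.2.2, h.2.1⟩

theorem isChordOf_add_natCast_iff (i : ZMod n) {a b : ℕ} (hab : a < b) (hbn : b < n) :
    G.IsChordOf f (i + a) (i + b) ↔
      G.Adj (f (i + a)) (f (i + b)) ∧ a + 2 ≤ b ∧ (a = 0 → b + 1 < n) := by
  have hnext : i + b = i + a + 1 ↔ b = a + 1 := by
    rw [add_assoc, add_right_inj, ← Nat.cast_succ,
      ZMod.natCast_eq_natCast_iff_of_lt hbn (by omega)]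
  have hprev : i + a = i + b + 1 ↔ a = 0 ∧ b + 1 = n := by
    rw [add_assoc, add_right_inj, ← Nat.cast_succ]
    rcases (Nat.succ_le_of_lt hbn).lt_or_eq with hlt | heq
    · rw [ZMod.natCast_eq_natCast_iff_of_lt (by omega) hlt]
      omega
    · rw [heq, ZMod.natCast_self, ← Nat.cast_zero,
        ZMod.natCast_eq_natCast_iff_of_lt (by omega) (by omega)]
      omega
  simp only [IsChordOf, ne_eq, hnext, hprev]
  exact and_congr_right fun _ => by omega

def cycleArc (f : ZMod n → V) (i : ZMod n) (d : ℕ) : ZMod (d + 1) → V :=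
  fun k => f (i + k.val)

theorem IsCycleEmb.cycleArc (hf : G.IsCycleEmb f) {i : ZMod n} {d : ℕ} (hdn : d < n)
    (hadj : G.Adj (f (i + d)) (f i)) : G.IsCycleEmb (cycleArc f i d) := by
  have hval (k : ZMod (d + 1)) : k.val < n := by have := k.val_lt; omega
  refine ⟨fun p q hpq => ZMod.val_injective _ ?_, fun k => ?_⟩
  · exact (ZMod.natCast_eq_natCast_iff_of_lt (hval p) (hval q)).1
      (add_left_cancel (hf.1 hpq))
  have hsucc : k + 1 = ((k.val + 1 : ℕ) : ZMod (d + 1)) := by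
    rw [Nat.cast_succ, ZMod.natCast_zmod_val]
  rcases (Nat.lt_succ_iff.mp k.val_lt).lt_or_eq with hlt | heq
  · change G.Adj (f (i + k.val)) (f (i + (k + 1).val))
    rw [hsucc, ZMod.val_cast_of_lt (by omega), Nat.cast_succ, ← add_assoc]
    exact hf.2 _
  · simpa only [SimpleGraph.cycleArc, hsucc, heq, ZMod.natCast_self, ZMod.val_zero,
      Nat.cast_zero, add_zero] using hadj

theorem exists_isChordOf_add_lt_of_isChordOf_cycleArc {i : ZMod n} {d : ℕ} (hdn : d < n)
    {p q : ZMod (d + 1)} (h : G.IsChordOf (cycleArc f i d) p q) :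
    ∃ (i' : ZMod n) (e : ℕ), e < d ∧ G.IsChordOf f i' (i' + e) := by
  wlog hpq : p.val < q.val generalizing p q
  · have hne : p.val ≠ q.val := fun heq => G.irrefl (ZMod.val_injective _ heq ▸ h.1)
    exact this h.symm (by omega)
  have hq := q.val_lt
  have harc := (isChordOf_add_natCast_iff (G := G) (f := cycleArc f i d) 0 hpq hq).1
    (by simpa only [zero_add, ZMod.natCast_zmod_val] using h)
  refine ⟨i + p.val, q.val - p.val, by omega, ?_⟩
  rw [Nat.cast_sub hpq.le, add_add_sub_cancel, isChordOf_add_natCast_iff i hpq (by omega)]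
  exact ⟨h.1, harc.2.1, by omega⟩

theorem Chordal.exists_isChordOf_add_two (hG : G.Chordal) (hn : 4 ≤ n)
    (hf : G.IsCycleEmb f) : ∃ i, G.IsChordOf f i (i + 2) := by
  have : NeZero n := ⟨by omega⟩
  classical
  obtain ⟨i₀, j₀, h₀⟩ := hG n hn f hf
  have hex : ∃ d < n, ∃ i, G.IsChordOf f i (i + d) :=
    ⟨_, ZMod.val_lt (j₀ - i₀), i₀, by rwa [ZMod.natCast_zmod_val, add_sub_cancel]⟩
  obtain ⟨hdn, i, hi⟩ := Nat.find_spec hex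
  generalize hd : Nat.find hex = d at hdn hi
  have h0 : d ≠ 0 := fun h => by simp [h, IsChordOf] at hi
  have h1 : d ≠ 1 := fun h => by simp [h, IsChordOf] at hi
  rcases (show 2 ≤ d by omega).eq_or_lt with h2 | h3
  · exact ⟨i, by simpa [← h2] using hi⟩
  obtain ⟨p, q, hpq⟩ := hG _ (by omega) _ (hf.cycleArc hdn hi.1.symm)
  obtain ⟨i', e, hlt, he⟩ := exists_isChordOf_add_lt_of_isChordOf_cycleArc hdn hpq
  exact (Nat.find_min hex (hd ▸ hlt) ⟨by omega, i', he⟩).elim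

end SimpleGraph

theorem chordal_iff_one_chord_triangle_general {V : Type*} (G : SimpleGraph V) :
    G.Chordal ↔ ∀ (n : ℕ), 4 ≤ n → ∀ f : ZMod n → V, G.IsCycleEmb f →
      ∃ i : ZMod n, G.IsChordOf f i (i + 2) :=
  ⟨fun hG _ hn _ hf => hG.exists_isChordOf_add_two hn hf,
    fun h n hn f hf => (h n hn f hf).imp fun i hi => ⟨i + 2, hi⟩⟩

/-- A finite simple graph is chordal iff every cycle of length greater than 3 has an
induced 1-chord triangle: three consecutive vertices of the cycle whose first and third
vertices are joined by a chord, forming a triangle with the two consecutive cycle edges. -/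
theorem chordal_iff_one_chord_triangle {V : Type*} [Fintype V] (G : SimpleGraph V) :
    G.Chordal ↔ ∀ (n : ℕ), 4 ≤ n → ∀ f : ZMod n → V, G.IsCycleEmb f →
      ∃ i : ZMod n, G.IsChordOf f i (i + 2) :=
  chordal_iff_one_chord_triangle_general G
end

section
/- A finite simple graph G is strongly chordal if and only if its clique matrix C(G) is totally balanced. -/
open scoped Classical

/-- A 0-1 matrix is totally balanced if it has no `k × k` submatrix (`k ≥ 3`),
with no two identical columns, in which every row sum and every column sum
equals 2 (the edge-vertex incidence matrix of a cycle of length at least 3). -/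
def TotallyBalanced {α β : Type*} [Fintype α] [Fintype β] (M : Matrix α β ℕ) : Prop :=
  ¬ ∃ (k : ℕ), 3 ≤ k ∧ ∃ (r : Fin k → α) (c : Fin k → β),
      Function.Injective r ∧ Function.Injective c ∧
      (∀ j j' : Fin k, (∀ i : Fin k, M (r i) (c j) = M (r i) (c j')) → j = j') ∧
      (∀ i : Fin k, ∑ j : Fin k, M (r i) (c j) = 2) ∧
      (∀ j : Fin k, ∑ i : Fin k, M (r i) (c j) = 2)

/-- The neighborhood matrix `M(G)` of `G` with respect to the vertex ordering `σ`:
the `(i, j)` entry is 1 if `σ i ∈ N[σ j]` and 0 otherwise. -/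
noncomputable def SimpleGraph.nbhdMatrix {V : Type*} [Fintype V] (G : SimpleGraph V)
    (σ : Fin (Fintype.card V) ≃ V) :
    Matrix (Fin (Fintype.card V)) (Fin (Fintype.card V)) ℕ :=
  fun i j => if σ i ∈ G.closedNbhd (σ j) then 1 else 0

/-- A maximal clique of `G`: a clique contained in no strictly larger clique. -/
def SimpleGraph.IsMaxClique {V : Type*} (G : SimpleGraph V) (S : Set V) : Prop :=
  G.IsClique S ∧ ∀ T : Set V, G.IsClique T → S ⊆ T → S = T

/-- The clique matrix `C(G)` of `G`: rows indexed by vertices, columns by maximal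
cliques, with `(v, K)` entry 1 if `v ∈ K` and 0 otherwise. -/
noncomputable def SimpleGraph.cliqueMatrix {V : Type*} (G : SimpleGraph V) :
    Matrix V {S : Set V // G.IsMaxClique S} ℕ :=
  fun v K => if v ∈ K.1 then 1 else 0


/-!
Both sides are compared with the absence of suns. A cycle submatrix of the clique matrix is a
2-regular bipartite pattern, and following its marks alternately along rows and columns cuts
out a special cycle: vertices `v i` and maximal cliques `K j` with `v i ∈ K j` iff
`i ∈ {j, j + 1}`. A chordless cycle or a sun gives a special cycle directly. Conversely, in a
chordal graph a shortest special cycle is tight (a maximal clique through two non-consecutive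
`v i` contains them all, else it shortcuts the cycle), and a vertex of each `K j` not adjacent
to `v (j + 2)` then completes the `v i` to a sun. Finally, the cycle `w 0, u 0, w 1, u 1, …` of
a sun has no strong chord, while in a chordal graph an even cycle without strong chord has its
ears `c (s - 1) c (s + 1)` on all positions `s` of one parity, which is again a sun.
-/

open Function

namespace ZMod

theorem natCast_ne_zero_of_lt {m a : ℕ} (ha : 0 < a) (ham : a < m) : (a : ZMod m) ≠ 0 := by
  rw [Ne, natCast_eq_zero_iff]
  exact fun h => absurd (Nat.le_of_dvd ha h) (by omega)

theorem eq_of_forall_eq_or_eq_add_one_iff {m : ℕ} (hm : 3 ≤ m) {j j' : ZMod m}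
    (h : ∀ i, i = j ∨ i = j + 1 ↔ i = j' ∨ i = j' + 1) : j = j' := by
  have h2 : (2 : ZMod m) ≠ 0 := mod_cast natCast_ne_zero_of_lt (a := 2) two_pos (by omega)
  rcases (h j).1 (Or.inl rfl) with hj | hj
  · exact hj
  rcases (h (j + 1)).1 (Or.inr rfl) with hj1 | hj1
  · exact absurd (by linear_combination hj1 - hj) h2
  · exact add_right_cancel hj1

theorem exists_eq_add_natCast {n : ℕ} [NeZero n] (i j : ZMod n) : ∃ d < n, j = i + d :=
  ⟨(j - i).val, val_lt _, by rw [natCast_zmod_val]; ring⟩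

theorem val_add_one_of_val_ne {d : ℕ} {t : ZMod (d + 1)} (h : t.val ≠ d) :
    (t + 1).val = t.val + 1 := by
  have hd : d ≠ 0 := by rintro rfl; exact h (Nat.lt_one_iff.1 (val_lt t))
  rw [val_add, val_one'' (by omega), Nat.mod_eq_of_lt]
  have := val_lt t
  omega

theorem add_one_eq_zero_of_val_eq {d : ℕ} {t : ZMod (d + 1)} (h : t.val = d) : t + 1 = 0 := by
  rw [← natCast_zmod_val t, h]
  exact_mod_cast natCast_self (d + 1)

theorem add_val_injective {n d : ℕ} (hd : d < n) (i : ZMod n) :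
    Injective fun t : ZMod (d + 1) => i + (t.val : ZMod n) := by
  intro s t hst
  have h := congrArg val (add_left_cancel hst)
  rw [val_natCast_of_lt ((val_lt s).trans_le hd), val_natCast_of_lt ((val_lt t).trans_le hd)] at h
  exact val_injective _ h

theorem exists_gap {m : ℕ} [NeZero m] {S : ZMod m → Prop} {a b c : ZMod m} (ha : S a) (hb : S b)
    (hab : a ≠ b) (hab' : a ≠ b + 1) (hba' : b ≠ a + 1) (hc : ¬ S c) :
    ∃ e, ∃ g : ℕ, 2 ≤ g ∧ g + 2 ≤ m ∧ S e ∧ S (e + g) ∧ ∀ t : ℕ, 0 < t → t < g → ¬ S (e + t) := by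
  obtain ⟨e, he, he1⟩ : ∃ e, S e ∧ ¬ S (e + 1) := by
    by_contra! hclosed
    have hall (t : ℕ) : S (a + t) := by
      induction t with
      | zero => simpa using ha
      | succ t iht => simpa [add_assoc] using hclosed _ iht
    obtain ⟨d, -, rfl⟩ := exists_eq_add_natCast a c
    exact hc (hall d)
  -- one of `a`, `b` lies outside `{e - 1, e}`
  obtain ⟨x, hx, hxe, hxe'⟩ : ∃ x, S x ∧ x ≠ e ∧ x + 1 ≠ e := by
    by_cases hae : a ≠ e ∧ a + 1 ≠ e
    · exact ⟨a, ha, hae⟩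
    refine ⟨b, hb, ?_⟩
    rcases not_and_or.1 hae with hae | hae <;> rw [not_not] at hae <;> subst hae
    · exact ⟨hab.symm, hab'.symm⟩
    · exact ⟨hba', fun h => hab (add_right_cancel h).symm⟩
  obtain ⟨d, hd, rfl⟩ := exists_eq_add_natCast e x
  have hd0 : d ≠ 0 := by rintro rfl; simp at hxe
  have hd1 : d ≠ 1 := by rintro rfl; exact he1 (by simpa using hx)
  have hdm : d + 1 ≠ m := by
    rintro rfl
    exact hxe' (by rw [add_assoc, ← Nat.cast_succ, natCast_self, add_zero])
  have hex : ∃ g : ℕ, 2 ≤ g ∧ S (e + g) := ⟨d, by omega, hx⟩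
  have hgd : Nat.find hex ≤ d := Nat.find_min' hex ⟨by omega, hx⟩
  obtain ⟨hg2, hgS⟩ := Nat.find_spec hex
  refine ⟨e, Nat.find hex, hg2, by omega, he, hgS, fun t ht0 htg htS => ?_⟩
  rcases (show t = 1 ∨ 2 ≤ t by omega) with rfl | ht2
  · exact he1 (by simpa using htS)
  · exact Nat.find_min hex htg ⟨ht2, htS⟩

variable {k : ℕ}

def parity (k : ℕ) : ZMod (k + k) →+* ZMod 2 :=
  castHom ⟨k, (two_mul k).symm⟩ (ZMod 2)

theorem odd_val_sub_iff [NeZero k] (i j : ZMod (k + k)) :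
    Odd (j - i).val ↔ parity k i ≠ parity k j := by
  have : NeZero (k + k) := ⟨by have := NeZero.ne k; omega⟩
  rw [← natCast_eq_one_iff_odd, ← cast_eq_val, ← castHom_apply (h := ⟨k, (two_mul k).symm⟩),
    map_sub, ← parity]
  generalize parity k i = a
  generalize parity k j = b
  revert a b
  decide

/-- The embedding `i ↦ 2 i` of `ZMod k` onto the even residues modulo `k + k`. -/
def double (k : ℕ) : ZMod k →+ ZMod (k + k) :=
  lift k ⟨(AddMonoidHom.mulLeft 2).comp (Int.castAddHom _), by
    have := natCast_self (k + k)
    push_cast at this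
    simpa [two_mul] using this⟩

theorem double_intCast (z : ℤ) : double k z = 2 * z := by
  simp [double, lift_coe]

theorem double_add_one (i : ZMod k) : double k (i + 1) = double k i + 2 := by
  rw [map_add, ← Int.cast_one, double_intCast, Int.cast_one, mul_one]

theorem parity_double (i : ZMod k) : parity k (double k i) = 0 := by
  obtain ⟨z, rfl⟩ := intCast_surjective i
  rw [double_intCast, map_mul, map_ofNat, show (2 : ZMod 2) = 0 from rfl, zero_mul]

theorem parity_double_add_one (i : ZMod k) : parity k (double k i + 1) = 1 := by
  rw [map_add, parity_double, map_one, zero_add]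

theorem double_injective [NeZero k] : Injective (double k) := by
  refine (injective_iff_map_eq_zero _).2 fun i hi => ?_
  obtain ⟨z, rfl⟩ := intCast_surjective i
  rw [double_intCast, ← Int.cast_ofNat, ← Int.cast_mul, intCast_zmod_eq_zero_iff_dvd,
    show ((k + k : ℕ) : ℤ) = 2 * k by push_cast; ring] at hi
  exact (intCast_zmod_eq_zero_iff_dvd _ _).2 ((mul_dvd_mul_iff_left two_ne_zero).1 hi)

/-- Residues modulo `k + k` as the even ones `2 i` and the odd ones `2 i + 1`. -/
noncomputable def interleave (k : ℕ) [NeZero k] : ZMod k ⊕ ZMod k ≃ ZMod (k + k) :=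
  have : NeZero (k + k) := ⟨by have := NeZero.ne k; omega⟩
  Equiv.ofBijective (Sum.elim (double k) fun i => double k i + 1) <|
    (Fintype.bijective_iff_injective_and_card _).2
      ⟨double_injective.sumElim ((add_left_injective 1).comp double_injective) fun a b h => by
        simpa [parity_double, parity_double_add_one] using congrArg (parity k) h,
        by simp [ZMod.card]⟩

end ZMod

namespace Equiv.Perm

variable {E : Type*} {κ ρ : Perm E}

theorem exists_injective_zmod_orbit [Finite E] (σ : Perm E) (e₀ : E) :
    ∃ m, 0 < m ∧ ∃ f : ZMod m → E, Injective f ∧ (∀ t, f (t + 1) = σ (f t)) ∧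
      ∀ s t, ∃ z : ℤ, f t = (σ ^ z) (f s) := by
  set m := Function.minimalPeriod (σ • ·) e₀
  let f : ZMod m → E := fun t => (MulAction.orbitZPowersEquiv σ e₀).symm t
  have hf (z : ℤ) : f z = (σ ^ z) e₀ := by
    show ((MulAction.orbitZPowersEquiv σ e₀).symm (z : ZMod m) : E) = _
    rw [MulAction.orbitZPowersEquiv_symm_apply']
    rfl
  refine ⟨m, Nat.pos_of_ne_zero (NeZero.ne m), f,
    Subtype.val_injective.comp (Equiv.injective _), fun t => ?_, fun s t => ?_⟩
  · obtain ⟨z, rfl⟩ := ZMod.intCast_surjective t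
    rw [← Int.cast_one, ← Int.cast_add, hf, hf, add_comm, zpow_one_add, mul_apply]
  · obtain ⟨a, rfl⟩ := ZMod.intCast_surjective s
    obtain ⟨b, rfl⟩ := ZMod.intCast_surjective t
    exact ⟨b - a, by rw [hf, hf, ← mul_apply, ← zpow_add, sub_add_cancel]⟩

/-- The orbit of `e` under `κ * ρ` and its image under `κ` are the two parity classes of a
dihedral orbit, hence disjoint. -/
theorem zpow_mul_apply_ne (hκ : κ * κ = 1) (hρ : ρ * ρ = 1) (hκe : ∀ e, κ e ≠ e)
    (hρe : ∀ e, ρ e ≠ e) (n : ℤ) (e : E) : ((κ * ρ) ^ n) e ≠ κ e := by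
  set σ := κ * ρ
  have hκinv : κ⁻¹ = κ := inv_eq_of_mul_eq_one_left hκ
  have hconj (d : ℤ) : κ * σ ^ d = σ ^ (-d) * κ := by
    have : κ * σ * κ⁻¹ = σ⁻¹ := by
      rw [hκinv, mul_inv_rev, hκinv, inv_eq_of_mul_eq_one_left hρ, ← mul_assoc, hκ, one_mul]
    rw [← inv_zpow', ← this, conj_zpow, hκinv, mul_assoc, hκ, mul_one]
  intro h
  obtain ⟨d, rfl | rfl⟩ := n.even_or_odd'
  · apply hκe ((σ ^ d) e)
    rw [← mul_apply, hconj, mul_apply, ← h, ← mul_apply, ← zpow_add]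
    congr 2
    ring
  · apply hρe ((σ ^ d) e)
    apply κ.injective
    rw [← mul_apply, ← mul_apply, ← zpow_one_add, ← mul_apply, hconj, mul_apply, ← h,
      ← mul_apply, ← zpow_add]
    congr 2
    ring

end Equiv.Perm

theorem exists_involution_of_forall_fiber_eq_pair {E X : Type*} (φ : E → X)
    (h : ∀ e, ∃ e', e' ≠ e ∧ ∀ e'', φ e'' = φ e ↔ e'' = e ∨ e'' = e') :
    ∃ τ : Equiv.Perm E, τ * τ = 1 ∧ (∀ e, τ e ≠ e) ∧ ∀ e e', φ e' = φ e ↔ e' = e ∨ e' = τ e := by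
  choose τ hτne hτ using h
  have hinv : Involutive τ := fun e => by
    have h1 : φ (τ e) = φ e := (hτ e (τ e)).2 (Or.inr rfl)
    rcases (hτ e (τ (τ e))).1 (((hτ (τ e) _).2 (Or.inr rfl)).trans h1) with h2 | h2
    exacts [h2, absurd h2 (hτne (τ e))]
  exact ⟨hinv.toPerm, Equiv.ext hinv, hτne, hτ⟩

section TwoRegular

variable {ι β : Type*} {Q : ι → β → Prop}

theorem three_le_of_cyclic_pattern {m : ℕ} [NeZero m] {R : ZMod m → ι} {C : ZMod m → β}
    (hcol : ∀ i j, Q i (C j) ↔ i = R j ∨ i = R (j + 1))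
    (hpat : ∀ j j', (∀ i, Q i j ↔ Q i j') → j = j') (hC : ∀ j, C (j + 1) ≠ C j) : 3 ≤ m := by
  have := NeZero.ne m
  by_contra! hm
  rcases (show m = 1 ∨ m = 2 by omega) with rfl | rfl
  · exact hC 0 (congrArg C (Subsingleton.elim _ _))
  · refine hC 0 (hpat _ _ fun i => ?_)
    rw [hcol, hcol, show (0 + 1 : ZMod 2) = 1 from rfl, show (1 + 1 : ZMod 2) = 0 from rfl,
      or_comm]

/-- The orbit of `κ * ρ`, where `κ` and `ρ` swap a mark of `Q` with the other mark in its row,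
resp. column, runs once around a cycle of marks. -/
theorem exists_cyclic_of_involutions [Finite ι] [Finite β]
    (hpat : ∀ j j', (∀ i, Q i j ↔ Q i j') → j = j') {κ ρ : Equiv.Perm {p : ι × β // Q p.1 p.2}}
    (hκ : κ * κ = 1) (hρ : ρ * ρ = 1) (hκe : ∀ e, κ e ≠ e) (hρe : ∀ e, ρ e ≠ e)
    (hκf : ∀ e e', e'.1.1 = e.1.1 ↔ e' = e ∨ e' = κ e)
    (hρf : ∀ e e', e'.1.2 = e.1.2 ↔ e' = e ∨ e' = ρ e) (e₀ : {p : ι × β // Q p.1 p.2}) :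
    ∃ m, 3 ≤ m ∧ ∃ (R : ZMod m → ι) (C : ZMod m → β),
      Injective R ∧ ∀ i j, Q (R i) (C j) ↔ i = j ∨ i = j + 1 := by
  have hκrow e : (κ e).1.1 = e.1.1 := (hκf e (κ e)).2 (Or.inr rfl)
  have hρcol e : (ρ e).1.2 = e.1.2 := (hρf e (ρ e)).2 (Or.inr rfl)
  obtain ⟨m, hm, f, hfinj, hfsucc, hfpow⟩ := (κ * ρ).exists_injective_zmod_orbit e₀
  have : NeZero m := ⟨hm.ne'⟩
  have hfκ (s t : ZMod m) : f t ≠ κ (f s) := by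
    obtain ⟨z, hz⟩ := hfpow s t
    exact hz ▸ Equiv.Perm.zpow_mul_apply_ne hκ hρ hκe hρe z (f s)
  have hρsucc (t : ZMod m) : ρ (f t) = κ (f (t + 1)) := by
    rw [hfsucc, ← Equiv.Perm.mul_apply κ, ← mul_assoc, hκ, one_mul]
  set R : ZMod m → ι := fun t => (f t).1.1
  set C : ZMod m → β := fun t => (f t).1.2
  have hR : Injective R := fun a b hab => by
    rcases (hκf (f a) (f b)).1 hab.symm with h | h
    exacts [(hfinj h).symm, absurd h (hfκ a b)]
  have hcolumn (i : ι) (j : ZMod m) : Q i (C j) ↔ i = R j ∨ i = R (j + 1) := by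
    have hR1 : R (j + 1) = (ρ (f j)).1.1 := by rw [hρsucc, hκrow]
    refine ⟨fun h => ?_, ?_⟩
    · rcases (hρf (f j) ⟨(i, C j), h⟩).1 rfl with h' | h'
      exacts [Or.inl congr($h'.1.1), Or.inr (hR1 ▸ congr($h'.1.1))]
    · rintro (rfl | rfl)
      · exact (f j).2
      · have := (ρ (f j)).2
        rwa [hρcol, ← hR1] at this
  have hC (j : ZMod m) : C (j + 1) ≠ C j := fun h => hκe (ρ (f j)) <|
    Subtype.ext <| Prod.ext (hκrow _) (by rw [hρcol, ← Equiv.Perm.mul_apply, ← hfsucc]; exact h)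
  exact ⟨m, three_le_of_cyclic_pattern hcolumn hpat hC, R, C, hR, fun i j => by
    rw [hcolumn, hR.eq_iff, hR.eq_iff]⟩

theorem exists_cyclic_of_forall_eq_pair [Finite ι] [Finite β]
    (hrow : ∀ i j, Q i j → ∃ j', j' ≠ j ∧ ∀ j'', Q i j'' ↔ j'' = j ∨ j'' = j')
    (hcol : ∀ i j, Q i j → ∃ i', i' ≠ i ∧ ∀ i'', Q i'' j ↔ i'' = i ∨ i'' = i')
    (hpat : ∀ j j', (∀ i, Q i j ↔ Q i j') → j = j') {i₀ : ι} {j₀ : β} (h₀ : Q i₀ j₀) :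
    ∃ m, 3 ≤ m ∧ ∃ (R : ZMod m → ι) (C : ZMod m → β),
      Injective R ∧ ∀ i j, Q (R i) (C j) ↔ i = j ∨ i = j + 1 := by
  obtain ⟨κ, hκ, hκe, hκf⟩ := exists_involution_of_forall_fiber_eq_pair
    (fun e : {p : ι × β // Q p.1 p.2} => e.1.1) <| by
    rintro ⟨⟨i, j⟩, hij⟩
    obtain ⟨j', hj', hrow'⟩ := hrow i j hij
    refine ⟨⟨(i, j'), (hrow' j').2 (Or.inr rfl)⟩, fun h => hj' congr($h.1.2), ?_⟩
    rintro ⟨⟨i'', j''⟩, h''⟩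
    constructor
    · rintro rfl
      rcases (hrow' j'').1 h'' with rfl | rfl <;> simp
    · rintro (⟨rfl, -⟩ | ⟨rfl, -⟩) <;> rfl
  obtain ⟨ρ, hρ, hρe, hρf⟩ := exists_involution_of_forall_fiber_eq_pair
    (fun e : {p : ι × β // Q p.1 p.2} => e.1.2) <| by
    rintro ⟨⟨i, j⟩, hij⟩
    obtain ⟨i', hi', hcol'⟩ := hcol i j hij
    refine ⟨⟨(i', j), (hcol' i').2 (Or.inr rfl)⟩, fun h => hi' congr($h.1.1), ?_⟩
    rintro ⟨⟨i'', j''⟩, h''⟩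
    constructor
    · rintro rfl
      rcases (hcol' i'').1 h'' with rfl | rfl <;> simp
    · rintro (⟨-, rfl⟩ | ⟨-, rfl⟩) <;> rfl
  exact exists_cyclic_of_involutions hpat hκ hρ hκe hρe hκf hρf ⟨(i₀, j₀), h₀⟩

end TwoRegular

theorem Finset.exists_ne_forall_mem_iff_of_card_eq_two {γ : Type*} {s : Finset γ}
    (hs : s.card = 2) {x : γ} (hx : x ∈ s) : ∃ y, y ≠ x ∧ ∀ z, z ∈ s ↔ z = x ∨ z = y := by
  obtain ⟨a, b, hab, rfl⟩ := Finset.card_eq_two.1 hs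
  rcases Finset.mem_insert.1 hx with rfl | hx
  · exact ⟨b, hab.symm, by simp⟩
  · rw [Finset.mem_singleton.1 hx]
    exact ⟨a, hab, by simp [or_comm]⟩

theorem sum_ite_eq_or_eq {γ : Type*} [Fintype γ] [DecidableEq γ] {x y : γ} (hxy : x ≠ y) :
    ∑ z : γ, (if z = x ∨ z = y then 1 else 0 : ℕ) = 2 := by
  rw [Finset.sum_boole, Nat.cast_id, ← Finset.card_pair hxy]
  congr 1
  ext
  simp

section TotallyBalanced

variable {α β : Type*} [Fintype α] [Fintype β] {P : α → β → Prop}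

theorem not_totallyBalanced_of_cyclic {m : ℕ} (hm : 3 ≤ m) {r : ZMod m → α} {c : ZMod m → β}
    (hr : Injective r) (hrc : ∀ i j, P (r i) (c j) ↔ i = j ∨ i = j + 1) :
    ¬ TotallyBalanced (fun a b => if P a b then 1 else 0 : Matrix α β ℕ) := by
  have : NeZero m := ⟨by omega⟩
  have h1 : (1 : ZMod m) ≠ 0 := mod_cast ZMod.natCast_ne_zero_of_lt (a := 1) one_pos (by omega)
  have hpat (j j' : ZMod m) (h : ∀ i, P (r i) (c j) ↔ P (r i) (c j')) : j = j' :=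
    ZMod.eq_of_forall_eq_or_eq_add_one_iff hm fun i => by rw [← hrc, ← hrc, h]
  let e : Fin m ≃ ZMod m := (ZMod.finEquiv m).toEquiv
  refine not_not.2 ⟨m, hm, r ∘ e, c ∘ e, hr.comp e.injective,
    fun a b hab => e.injective (hpat _ _ fun i => by rw [show c (e a) = c (e b) from hab]),
    fun a b hab => e.injective (hpat _ _ fun i => ?_), fun a => ?_, fun b => ?_⟩
  · have := hab (e.symm i)
    simp only [Function.comp, Equiv.apply_symm_apply] at this
    split_ifs at this with h₁ h₂ h₂
    exacts [iff_of_true h₁ h₂, iff_of_false h₁ h₂]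
  · change ∑ j, (if P (r (e a)) (c (e j)) then 1 else 0) = 2
    rw [e.sum_comp (fun z => if P (r (e a)) (c z) then 1 else 0)]
    simp only [hrc, eq_comm (a := e a), ← eq_sub_iff_add_eq]
    exact sum_ite_eq_or_eq fun h => h1 (by linear_combination h)
  · change ∑ i, (if P (r (e i)) (c (e b)) then 1 else 0) = 2
    rw [e.sum_comp (fun z => if P (r z) (c (e b)) then 1 else 0)]
    simp only [hrc]
    exact sum_ite_eq_or_eq fun h => h1 (by linear_combination -h)

theorem exists_cyclic_of_not_totallyBalanced
    (h : ¬ TotallyBalanced (fun a b => if P a b then 1 else 0 : Matrix α β ℕ)) :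
    ∃ m, 3 ≤ m ∧ ∃ (r : ZMod m → α) (c : ZMod m → β),
      Injective r ∧ ∀ i j, P (r i) (c j) ↔ i = j ∨ i = j + 1 := by
  obtain ⟨k, hk, r, c, hr, -, hpat, hrow, hcol⟩ := not_not.1 h
  have hcard {s : Fin k → Prop} (h : ∑ j, (if s j then 1 else 0 : ℕ) = 2) :
      (Finset.univ.filter s).card = 2 := by
    rwa [Finset.sum_boole, Nat.cast_id] at h
  have hrow' i j (hij : P (r i) (c j)) :
      ∃ j', j' ≠ j ∧ ∀ j'', P (r i) (c j'') ↔ j'' = j ∨ j'' = j' := by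
    simpa using Finset.exists_ne_forall_mem_iff_of_card_eq_two (hcard (hrow i)) (x := j)
      (by simpa using hij)
  have hcol' i j (hij : P (r i) (c j)) :
      ∃ i', i' ≠ i ∧ ∀ i'', P (r i'') (c j) ↔ i'' = i ∨ i'' = i' := by
    simpa using Finset.exists_ne_forall_mem_iff_of_card_eq_two (hcard (hcol j)) (x := i)
      (by simpa using hij)
  obtain ⟨j₀, hj₀⟩ := Finset.card_pos.1 ((hcard (hrow ⟨0, by omega⟩)).symm ▸ two_pos)
  obtain ⟨m, hm, R, C, hR, hRC⟩ := exists_cyclic_of_forall_eq_pair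
    (Q := fun i j => P (r i) (c j)) hrow' hcol'
    (fun j j' h => hpat j j' fun i => if_congr (h i) rfl rfl) (Finset.mem_filter.1 hj₀).2
  exact ⟨m, hm, r ∘ R, c ∘ C, hr.comp hR, hRC⟩

theorem totallyBalanced_iff_not_exists_cyclic :
    TotallyBalanced (fun a b => if P a b then 1 else 0 : Matrix α β ℕ) ↔
      ¬ ∃ m, 3 ≤ m ∧ ∃ (r : ZMod m → α) (c : ZMod m → β),
        Injective r ∧ ∀ i j, P (r i) (c j) ↔ i = j ∨ i = j + 1 :=
  ⟨fun h ⟨_, hm, _, _, hr, hrc⟩ => not_totallyBalanced_of_cyclic hm hr hrc h,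
    fun h => by_contra fun h' => h (exists_cyclic_of_not_totallyBalanced h')⟩

end TotallyBalanced

namespace SimpleGraph

variable {V : Type*} {G : SimpleGraph V}

open ZMod

theorem IsClique.exists_isMaxClique_superset {s : Set V} (hs : G.IsClique s) :
    ∃ K, G.IsMaxClique K ∧ s ⊆ K := by
  obtain ⟨K, hsK, hK⟩ := zorn_subset_nonempty {t | G.IsClique t}
    (fun c hc hchain _ => ⟨⋃₀ c, (isClique_sUnion hchain.directedOn).2 hc,
      fun _ => Set.subset_sUnion_of_mem⟩) s hs
  exact ⟨K, ⟨hK.prop, fun T hT hKT => hKT.antisymm (hK.2 hT hKT)⟩, hsK⟩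

theorem IsMaxClique.mem_of_forall_adj {K : Set V} (hK : G.IsMaxClique K) {y : V}
    (h : ∀ z ∈ K, z ≠ y → G.Adj z y) : y ∈ K := by
  rw [hK.2 _ (hK.1.insert fun z hz hyz => (h z hz (Ne.symm hyz)).symm) (Set.subset_insert _ _)]
  exact Set.mem_insert _ _

theorem IsCycleEmb.arc {n d : ℕ} {f : ZMod n → V} (hf : G.IsCycleEmb f) (hd : d < n) (i : ZMod n)
    (hclose : G.Adj (f (i + d)) (f i)) :
    G.IsCycleEmb fun t : ZMod (d + 1) => f (i + t.val) := by
  refine ⟨hf.1.comp (ZMod.add_val_injective hd i), fun t => ?_⟩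
  by_cases ht : t.val = d
  · simpa [ZMod.add_one_eq_zero_of_val_eq ht, ht] using hclose
  · simp only [ZMod.val_add_one_of_val_ne ht, Nat.cast_succ, ← add_assoc]
    exact hf.2 _

theorem IsCycleEmb.exists_shorter {n : ℕ} [NeZero n] {f : ZMod n → V} (hf : G.IsCycleEmb f)
    {i j : ZMod n} (hij : G.IsChordOf f i j) (p : ZMod n) :
    ∃ m, 3 ≤ m ∧ m < n ∧ ∃ φ : ZMod m → ZMod n, Injective φ ∧ G.IsCycleEmb (f ∘ φ) ∧
      ∃ q, φ q = p ∧ φ (q + 1) = p + 1 := by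
  -- a chord from `a` to `a + d` closes the arc `a, a + 1, …, a + d` into a shorter cycle
  have key a (d : ℕ) (hd : 2 ≤ d) (hdn : d + 2 ≤ n) (hclose : G.Adj (f (a + d)) (f a)) e
      (he : e < d) : ∃ m, 3 ≤ m ∧ m < n ∧ ∃ φ : ZMod m → ZMod n, Injective φ ∧
        G.IsCycleEmb (f ∘ φ) ∧ ∃ q, φ q = a + e ∧ φ (q + 1) = a + e + 1 := by
    refine ⟨d + 1, by omega, by omega, fun t => a + t.val, ZMod.add_val_injective (by omega) a,
      hf.arc (by omega) a hclose, e, ?_, ?_⟩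
    · simp only [ZMod.val_natCast_of_lt (show e < d + 1 by omega)]
    · simp only
      rw [← Nat.cast_succ, ZMod.val_natCast_of_lt (by omega), Nat.cast_succ, add_assoc]
  obtain ⟨hadj, hji, hij'⟩ := hij
  obtain ⟨d, hd, rfl⟩ := ZMod.exists_eq_add_natCast i j
  obtain ⟨e, he, rfl⟩ := ZMod.exists_eq_add_natCast i p
  have hd0 : d ≠ 0 := by rintro rfl; simp at hadj
  have hd1 : d ≠ 1 := by rintro rfl; simp at hji
  have hdn : d + 1 ≠ n := by
    rintro rfl
    exact hij' (by rw [add_assoc, ← Nat.cast_succ, ZMod.natCast_self, add_zero])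
  rcases lt_or_ge e d with hed | hed
  · exact key i d (by omega) (by omega) hadj.symm e hed
  · have hnd : ((n - d : ℕ) : ZMod n) = -d := by simp [Nat.cast_sub hd.le]
    have hed' : ((e - d : ℕ) : ZMod n) = e - d := Nat.cast_sub hed
    have := key (i + d) (n - d) (by omega) (by omega)
      (by rwa [hnd, add_neg_cancel_right]) (e - d) (by omega)
    rwa [hed', add_add_sub_cancel] at this

theorem Chordal.exists_common_adj (hG : G.Chordal) {n : ℕ} (hn : 3 ≤ n) {f : ZMod n → V}
    (hf : G.IsCycleEmb f) (p : ZMod n) :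
    ∃ y, y ≠ p ∧ y ≠ p + 1 ∧ G.Adj (f y) (f p) ∧ G.Adj (f y) (f (p + 1)) := by
  induction n using Nat.strong_induction_on with
  | _ n ih =>
  have : NeZero n := ⟨by omega⟩
  rcases (show n = 3 ∨ 4 ≤ n by omega) with rfl | hn4
  · have h3 : (3 : ZMod 3) = 0 := rfl
    refine ⟨p + 2, fun h => absurd (by linear_combination h) (by decide : (2 : ZMod 3) ≠ 0),
      fun h => absurd (by linear_combination h) (by decide : (1 : ZMod 3) ≠ 0), ?_, ?_⟩
    · simpa [show p + 2 + 1 = p by linear_combination h3] using hf.2 (p + 2)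
    · simpa [show p + 1 + 1 = p + 2 by ring] using (hf.2 (p + 1)).symm
  obtain ⟨i, j, hij⟩ := hG n hn4 f hf
  obtain ⟨m, hm, hmn, φ, hφ, hcyc, q, hq, hq1⟩ := hf.exists_shorter hij p
  obtain ⟨y, hy, hy1, h1, h2⟩ := ih m hmn hm hcyc q
  refine ⟨φ y, fun h => hy (hφ (h.trans hq.symm)), fun h => hy1 (hφ (h.trans hq1.symm)), ?_, ?_⟩
  · rw [← hq]; exact h1
  · rw [← hq1]; exact h2

/-- A special cycle of the hypergraph of maximal cliques of `G`, i.e. a cycle submatrix of the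
clique matrix. -/
structure IsSpecialCycle {m : ℕ} (G : SimpleGraph V) (v : ZMod m → V) (K : ZMod m → Set V) :
    Prop where
  injective : Injective v
  isMaxClique : ∀ j, G.IsMaxClique (K j)
  mem_iff : ∀ i j, v i ∈ K j ↔ i = j ∨ i = j + 1

def HasSpecialCycle (G : SimpleGraph V) : Prop :=
  ∃ m, 3 ≤ m ∧ ∃ (v : ZMod m → V) (K : ZMod m → Set V), G.IsSpecialCycle v K

/-- A sun with inner vertices `w i` and outer vertices `u i`; the inner vertices need only form
a cycle, not a clique. -/
structure IsSun {k : ℕ} (G : SimpleGraph V) (w u : ZMod k → V) : Prop where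
  injective : Injective w
  adj_succ : ∀ i, G.Adj (w i) (w (i + 1))
  adj_left : ∀ i, G.Adj (u i) (w i)
  adj_right : ∀ i, G.Adj (u i) (w (i + 1))
  ne : ∀ i a, a ≠ i → a ≠ i + 1 → u i ≠ w a
  not_adj : ∀ i a, a ≠ i → a ≠ i + 1 → ¬ G.Adj (u i) (w a)

def HasSun (G : SimpleGraph V) : Prop :=
  ∃ k, 3 ≤ k ∧ ∃ w u : ZMod k → V, G.IsSun w u

theorem exists_isSpecialCycle_of_isClique {m : ℕ} {v : ZMod m → V} (hv : Injective v)
    {C : ZMod m → Set V} (hC : ∀ j, G.IsClique (C j)) (hmem : ∀ j, v j ∈ C j ∧ v (j + 1) ∈ C j)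
    (hsep : ∀ j a, a ≠ j → a ≠ j + 1 → ∃ y ∈ C j, y ≠ v a ∧ ¬ G.Adj y (v a)) :
    ∃ K, G.IsSpecialCycle v K := by
  choose K hK hCK using fun j => (hC j).exists_isMaxClique_superset
  refine ⟨K, hv, hK, fun i j => ⟨fun hi => ?_, ?_⟩⟩
  · by_contra! hij
    obtain ⟨y, hy, hyv, hyadj⟩ := hsep j i hij.1 hij.2
    exact hyadj ((hK j).1 (hCK j hy) hi hyv)
  · rintro (rfl | rfl)
    exacts [hCK _ (hmem _).1, hCK _ (hmem _).2]

theorem IsSun.exists_isSpecialCycle {k : ℕ} {w u : ZMod k → V} (h : G.IsSun w u) :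
    ∃ K, G.IsSpecialCycle w K :=
  exists_isSpecialCycle_of_isClique h.injective (C := fun i => {u i, w i, w (i + 1)})
    (fun i => (isClique_pair.2 fun _ => h.adj_succ i).insert (by
      rintro b (rfl | rfl) - <;> [exact h.adj_left i; exact h.adj_right i]))
    (fun i => ⟨by simp, by simp⟩)
    (fun i a ha ha' => ⟨u i, by simp, h.ne i a ha ha', h.not_adj i a ha ha'⟩)

theorem HasSun.hasSpecialCycle (h : G.HasSun) : G.HasSpecialCycle := by
  obtain ⟨k, hk, w, u, hs⟩ := h
  obtain ⟨K, hK⟩ := hs.exists_isSpecialCycle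
  exact ⟨k, hk, w, K, hK⟩

theorem hasSpecialCycle_of_not_chordal (h : ¬ G.Chordal) : G.HasSpecialCycle := by
  simp only [Chordal, not_forall, not_exists] at h
  obtain ⟨n, hn, f, hf, hchordless⟩ := h
  have h2 : (2 : ZMod n) ≠ 0 := mod_cast ZMod.natCast_ne_zero_of_lt (a := 2) (by omega) (by omega)
  have h3 : (3 : ZMod n) ≠ 0 := mod_cast ZMod.natCast_ne_zero_of_lt (a := 3) (by omega) (by omega)
  have hcons : ∀ i a, G.Adj (f i) (f a) → a = i + 1 ∨ i = a + 1 := by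
    intro i a hia
    by_contra! h
    exact hchordless i a ⟨hia, h.1, h.2⟩
  obtain ⟨K, hK⟩ := exists_isSpecialCycle_of_isClique hf.1 (C := fun j => {f j, f (j + 1)})
    (fun j => isClique_pair.2 fun _ => hf.2 j) (fun j => ⟨by simp, by simp⟩) (by
      intro j a haj haj'
      by_cases hja : j = a + 1
      · refine ⟨f (j + 1), by simp, fun h => h2 ?_, fun h => ?_⟩
        · linear_combination hf.1 h - hja
        · rcases hcons _ _ h with h | h
          · exact h3 (by linear_combination -h - hja)
          · exact haj (add_right_cancel h).symm
      · refine ⟨f j, by simp, fun h => haj (hf.1 h).symm, fun h => ?_⟩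
        rcases hcons _ _ h with h | h
        exacts [haj' h, hja h])
  exact ⟨n, by omega, f, K, hK⟩

def IsTight {m : ℕ} (G : SimpleGraph V) (v : ZMod m → V) : Prop :=
  ∀ M, G.IsMaxClique M → ∀ a b, v a ∈ M → v b ∈ M → a ≠ b → a ≠ b + 1 → b ≠ a + 1 →
    ∀ c, v c ∈ M

namespace IsSpecialCycle

variable {m : ℕ} {v : ZMod m → V} {K : ZMod m → Set V}

theorem isCycleEmb (h : G.IsSpecialCycle v K) (hm : 2 ≤ m) : G.IsCycleEmb v := by
  have h1 : (1 : ZMod m) ≠ 0 := mod_cast ZMod.natCast_ne_zero_of_lt (a := 1) one_pos hm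
  refine ⟨h.injective, fun i => (h.isMaxClique i).1 ((h.mem_iff i i).2 (Or.inl rfl))
    ((h.mem_iff _ i).2 (Or.inr rfl)) (h.injective.ne fun hi => h1 ?_)⟩
  linear_combination -hi

theorem shrink (h : G.IsSpecialCycle v K) {g : ℕ} (hg : g < m) {M : Set V}
    (hM : G.IsMaxClique M) {e : ZMod m} (he : v e ∈ M) (heg : v (e + g) ∈ M)
    (hgap : ∀ t : ℕ, 0 < t → t < g → v (e + t) ∉ M) :
    G.IsSpecialCycle (fun t : ZMod (g + 1) => v (e + t.val))
      (fun t => if t.val = g then M else K (e + t.val)) := by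
  have hinj := ZMod.add_val_injective hg e
  refine ⟨h.injective.comp hinj, fun t => ?_, fun s t => ?_⟩
  · split_ifs
    exacts [hM, h.isMaxClique _]
  by_cases ht : t.val = g
  · simp only [ht, if_true, ZMod.add_one_eq_zero_of_val_eq ht]
    refine ⟨fun hs => ?_, ?_⟩
    · rcases Nat.eq_zero_or_pos s.val with hs0 | hs0
      · exact Or.inr ((ZMod.val_eq_zero s).1 hs0)
      · refine Or.inl (ZMod.val_injective _ ?_)
        by_contra hne
        exact hgap _ hs0 (by have := ZMod.val_lt s; omega) hs
    · rintro (rfl | rfl)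
      · rwa [ht]
      · simpa using he
  · have hsucc : e + ((t + 1).val : ZMod m) = e + t.val + 1 := by
      rw [ZMod.val_add_one_of_val_ne ht]
      push_cast
      ring
    simp only [ht, if_false, h.mem_iff]
    exact or_congr hinj.eq_iff (by rw [← hsucc]; exact hinj.eq_iff)

theorem exists_shorter (h : G.IsSpecialCycle v K) (hm : 3 ≤ m) {M : Set V}
    (hM : G.IsMaxClique M) {a b : ZMod m} (ha : v a ∈ M) (hb : v b ∈ M) (hab : a ≠ b)
    (hab' : a ≠ b + 1) (hba' : b ≠ a + 1) {c : ZMod m} (hc : v c ∉ M) :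
    ∃ m', 3 ≤ m' ∧ m' < m ∧ ∃ (v' : ZMod m' → V) (K' : ZMod m' → Set V),
      G.IsSpecialCycle v' K' := by
  have : NeZero m := ⟨by omega⟩
  obtain ⟨e, g, hg, hgm, he, heg, hgap⟩ := ZMod.exists_gap (S := (v · ∈ M)) ha hb hab hab' hba' hc
  exact ⟨g + 1, by omega, by omega, _, _, h.shrink (by omega) hM he heg hgap⟩

theorem adj_of_ne (hG : G.Chordal) (hm : 3 ≤ m) (h : G.IsSpecialCycle v K)
    (htight : G.IsTight v) {a b : ZMod m} (hab : a ≠ b) : G.Adj (v a) (v b) := by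
  have hcyc := h.isCycleEmb (by omega)
  rcases (show m = 3 ∨ 4 ≤ m by omega) with rfl | hm4
  · rcases (by decide : ∀ a b : ZMod 3, a ≠ b → b = a + 1 ∨ a = b + 1) a b hab with rfl | rfl
    exacts [hcyc.2 a, (hcyc.2 b).symm]
  · obtain ⟨i, j, hij, hji, hij'⟩ := hG m hm4 v hcyc
    obtain ⟨L, hL, hsub⟩ := (isClique_pair.2 fun _ => hij).exists_isMaxClique_superset
    have hall := htight L hL i j (hsub (by simp)) (hsub (by simp))
      (fun h => hij.ne (congrArg v h)) hij' hji
    exact hL.1 (hall a) (hall b) (h.injective.ne hab)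

theorem exists_isSun (hG : G.Chordal) (hm : 3 ≤ m) (h : G.IsSpecialCycle v K)
    (htight : G.IsTight v) : ∃ u, G.IsSun v u := by
  have h1 : (1 : ZMod m) ≠ 0 := mod_cast ZMod.natCast_ne_zero_of_lt (a := 1) one_pos (by omega)
  have h2 : (2 : ZMod m) ≠ 0 := mod_cast ZMod.natCast_ne_zero_of_lt (a := 2) two_pos (by omega)
  have hadj := fun {a b} => h.adj_of_ne hG hm htight (a := a) (b := b)
  have hmem (j) : v j ∈ K j ∧ v (j + 1) ∈ K j :=
    ⟨(h.mem_iff _ _).2 (.inl rfl), (h.mem_iff _ _).2 (.inr rfl)⟩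
  have hx : ∀ j, ∃ x ∈ K j, x ≠ v (j + 2) ∧ ¬ G.Adj x (v (j + 2)) := by
    intro j
    by_contra! hcon
    rcases (h.mem_iff _ _).1 ((h.isMaxClique j).mem_of_forall_adj hcon) with h' | h'
    · exact h2 (by linear_combination h')
    · exact h1 (by linear_combination h')
  choose x hxK hxv hxadj using hx
  have hxne : ∀ j c, x j ≠ v c := by
    rintro j c hc
    rcases (h.mem_iff c j).1 (hc ▸ hxK j) with rfl | rfl
    · exact hxadj c (hc ▸ hadj fun h' => h2 (by linear_combination -h'))
    · exact hxadj j (hc ▸ hadj fun h' => h1 (by linear_combination -h'))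
  have hxadj_of_mem {j c} (hc : v c ∈ K j) : G.Adj (x j) (v c) :=
    (h.isMaxClique j).1 (hxK j) hc (hxne j c)
  refine ⟨x, h.injective, (h.isCycleEmb (by omega)).2, fun i => hxadj_of_mem (hmem i).1,
    fun i => hxadj_of_mem (hmem i).2, fun i a _ _ => hxne i a, fun i a hai hai' hxa => ?_⟩
  by_cases ha2 : a = i + 2
  · exact hxadj i (ha2 ▸ hxa)
  -- a vertex of `K i` not consecutive to `a` spans with `x i` and `v a` a triangle whose
  -- maximal clique must then contain `v (i + 2)`
  obtain ⟨b, hbK, hba, hba', hab'⟩ : ∃ b, v b ∈ K i ∧ b ≠ a ∧ b ≠ a + 1 ∧ a ≠ b + 1 := by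
    by_cases hia : i = a + 1
    · exact ⟨i + 1, (hmem i).2, fun h => hai' h.symm,
        fun h => hai (add_right_cancel h).symm, fun h => ha2 (by linear_combination h)⟩
    · exact ⟨i, (hmem i).1, fun h => hai h.symm, hia, hai'⟩
  have htri : G.IsClique {x i, v b, v a} :=
    (isClique_pair.2 fun _ => hadj hba).insert (by
      rintro c (rfl | rfl) - <;> [exact hxadj_of_mem hbK; exact hxa])
  obtain ⟨L, hL, hsub⟩ := htri.exists_isMaxClique_superset
  exact hxadj i (hL.1 (hsub (by simp)) (htight L hL b a (hsub (by simp)) (hsub (by simp)) hba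
    hba' hab' (i + 2)) (hxv i))

end IsSpecialCycle

theorem HasSpecialCycle.hasSun (hG : G.Chordal) (h : G.HasSpecialCycle) : G.HasSun := by
  classical
  obtain ⟨hm, v, K, hs⟩ := Nat.find_spec h
  refine ⟨_, hm, v, hs.exists_isSun hG hm ?_⟩
  intro M hM a b ha hb hab hab' hba' c
  by_contra hc
  obtain ⟨m', hm', hlt, v', K', hs'⟩ := hs.exists_shorter hm hM ha hb hab hab' hba' hc
  exact Nat.find_min h hlt ⟨hm', v', K', hs'⟩

namespace IsSun

variable {k : ℕ} {w u : ZMod k → V}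

theorem disjoint_range (h : G.IsSun w u) : Disjoint (Set.range w) (Set.range u) := by
  refine Set.disjoint_range_iff.2 fun a i => Ne.symm ?_
  by_cases ha : a = i
  · exact ha ▸ (h.adj_left i).ne
  by_cases ha' : a = i + 1
  · exact ha' ▸ (h.adj_right i).ne
  exact h.ne i a ha ha'

theorem outer_injective (h : G.IsSun w u) (hk : 3 ≤ k) : Injective u := by
  have h2 : (2 : ZMod k) ≠ 0 := mod_cast natCast_ne_zero_of_lt (a := 2) two_pos (by omega)
  intro i j hij
  by_contra hne
  have hji : j = i + 1 := by
    by_contra hji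
    exact h.not_adj i j (Ne.symm hne) hji (hij ▸ h.adj_left j)
  have hij' : i = j + 1 := by
    by_contra hij'
    exact h.not_adj j i hne hij' (hij.symm ▸ h.adj_left i)
  exact h2 (by linear_combination -hji - hij')

end IsSun

theorem StronglyChordal.not_isSun (hG : G.StronglyChordal) {k : ℕ} (hk : 3 ≤ k)
    {w u : ZMod k → V} (h : G.IsSun w u) : False := by
  have : NeZero k := ⟨by omega⟩
  set e := interleave k
  set Z : ZMod (k + k) → V := Sum.elim w u ∘ e.symm
  have hZw (i : ZMod k) : Z (double k i) = w i := by
    simp [Z, show double k i = e (.inl i) from rfl]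
  have hZu (i : ZMod k) : Z (double k i + 1) = u i := by
    simp [Z, show double k i + 1 = e (.inr i) from rfl]
  have hZ : G.IsCycleEmb Z := by
    refine ⟨(h.injective.sumElim (h.outer_injective hk)
      (Set.disjoint_range_iff.1 h.disjoint_range)).comp e.symm.injective, fun t => ?_⟩
    obtain ⟨x | i, rfl⟩ := e.surjective t
    · exact hZw x ▸ hZu x ▸ (h.adj_left x).symm
    · have : e (.inr i) + 1 = double k (i + 1) := by
        rw [double_add_one, ← one_add_one_eq_two, ← add_assoc]
        rfl
      rw [this, hZw]
      exact hZu i ▸ h.adj_right i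
  have hfar (i a : ZMod k) (hadj : G.Adj (u i) (w a)) (h1 : double k i + 1 ≠ double k a + 1)
      (h2 : double k a ≠ double k i + 1 + 1) : False := by
    refine h.not_adj i a (fun hai => h1 (by rw [hai])) (fun hai => h2 ?_) hadj
    rw [hai, double_add_one, add_assoc, one_add_one_eq_two]
  obtain ⟨p, q, ⟨hpq, hqp, hpq'⟩, hodd⟩ := hG.2 (k + k) (by omega) ⟨k, rfl⟩ Z hZ
  rw [odd_val_sub_iff] at hodd
  obtain ⟨x | i, rfl⟩ := e.surjective p <;> obtain ⟨y | j, rfl⟩ := e.surjective q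
  · exact hodd ((parity_double x).trans (parity_double y).symm)
  · exact hfar j x (hZw x ▸ hZu j ▸ hpq.symm) hqp hpq'
  · exact hfar i y (hZw y ▸ hZu i ▸ hpq) hpq' hqp
  · exact hodd ((parity_double_add_one i).trans (parity_double_add_one j).symm)

section EvenCycle

variable {k : ℕ} [NeZero k] {c : ZMod (k + k) → V}

theorem eq_add_one_or_of_adj_of_parity_ne (hns : ∀ i j, ¬ G.IsStrongChordOf c i j)
    {i j : ZMod (k + k)} (hij : G.Adj (c i) (c j)) (hpar : parity k i ≠ parity k j) :
    j = i + 1 ∨ i = j + 1 := by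
  by_contra! h
  exact hns i j ⟨⟨hij, h.1, h.2⟩, (odd_val_sub_iff i j).2 hpar⟩

theorem eq_sub_one_or_eq_add_two_of_adj (hns : ∀ i j, ¬ G.IsStrongChordOf c i j)
    {y q : ZMod (k + k)} (hy : y ≠ q) (hy' : y ≠ q + 1) (hyq : G.Adj (c y) (c q))
    (hyq' : G.Adj (c y) (c (q + 1))) : y = q - 1 ∨ y = q + 2 := by
  by_cases hpar : parity k y = parity k q
  · have hpar' : parity k y ≠ parity k (q + 1) := by
      rw [hpar, map_add, map_one]
      generalize parity k q = a
      revert a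
      decide
    rcases eq_add_one_or_of_adj_of_parity_ne hns hyq' hpar' with h | h
    · exact absurd (add_right_cancel h).symm hy
    · exact Or.inr (by linear_combination h)
  · rcases eq_add_one_or_of_adj_of_parity_ne hns hyq hpar with h | h
    · exact Or.inl (by linear_combination -h)
    · exact absurd h hy'

theorem adj_or_adj_of_isCycleEmb (hG : G.Chordal) (hk : 2 ≤ k) (hc : G.IsCycleEmb c)
    (hns : ∀ i j, ¬ G.IsStrongChordOf c i j) (q : ZMod (k + k)) :
    G.Adj (c (q - 1)) (c (q + 1)) ∨ G.Adj (c q) (c (q + 2)) := by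
  obtain ⟨y, hy, hy', hyq, hyq'⟩ := hG.exists_common_adj (by omega) hc q
  rcases eq_sub_one_or_eq_add_two_of_adj hns hy hy' hyq hyq' with rfl | rfl
  exacts [Or.inl hyq', Or.inr hyq.symm]

theorem adj_add_two_of_adj (hG : G.Chordal) (hk : 2 ≤ k) (hc : G.IsCycleEmb c)
    (hns : ∀ i j, ¬ G.IsStrongChordOf c i j) {q : ZMod (k + k)}
    (hq : G.Adj (c (q - 1)) (c (q + 1))) : G.Adj (c (q + 1)) (c (q + 3)) := by
  have hcast : ((k + k - 2 : ℕ) : ZMod (k + k)) = -2 := by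
    simp [Nat.cast_sub (show 2 ≤ k + k by omega)]
  -- the chord `c (q - 1) c (q + 1)` cuts `c q` off the cycle
  have hcut := hc.arc (show k + k - 2 < k + k by omega) (q + 1)
    (by rwa [hcast, show q + 1 + -2 = q - 1 by ring])
  obtain ⟨y, hy0, hy1, hyq, hyq'⟩ := hG.exists_common_adj (by omega) hcut 0
  have hinj := add_val_injective (show k + k - 2 < k + k by omega) (q + 1)
  have hval1 : ((0 + 1 : ZMod (k + k - 2 + 1)).val : ZMod (k + k)) = 1 := by
    rw [zero_add, val_one'' (by omega), Nat.cast_one]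
  simp only [val_zero, Nat.cast_zero, add_zero, hval1] at hyq hyq'
  have hy0' : q + 1 + (y.val : ZMod (k + k)) ≠ q + 1 := fun h =>
    hy0 (hinj (show _ = q + 1 + ((0 : ZMod (k + k - 2 + 1)).val : ZMod (k + k)) by
      rw [val_zero, Nat.cast_zero, add_zero]; exact h))
  have hy1' : q + 1 + (y.val : ZMod (k + k)) ≠ q + 1 + 1 := fun h =>
    hy1 (hinj (show _ = q + 1 + ((0 + 1 : ZMod (k + k - 2 + 1)).val : ZMod (k + k)) by
      rw [hval1]; exact h))
  rcases eq_sub_one_or_eq_add_two_of_adj hns hy0' hy1' hyq hyq' with h | h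
  · have hy : ((y.val : ℕ) : ZMod (k + k)) = ((k + k - 1 : ℕ) : ZMod (k + k)) := by
      rw [Nat.cast_sub (by omega), natCast_self, Nat.cast_one]
      linear_combination h
    have hlt := val_lt y
    have := congrArg val hy
    rw [val_natCast_of_lt (by omega), val_natCast_of_lt (by omega)] at this
    omega
  · rw [h] at hyq
    simpa [show q + 1 + 2 = q + 3 by ring] using hyq.symm

theorem Chordal.exists_isSun (hG : G.Chordal) (hk : 3 ≤ k) (hc : G.IsCycleEmb c)
    (hns : ∀ i j, ¬ G.IsStrongChordOf c i j) : ∃ w u : ZMod k → V, G.IsSun w u := by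
  -- the ears `c (s - 1) c (s + 1)` propagate two steps along the cycle
  obtain ⟨s, hs⟩ : ∃ s, ∀ i, G.Adj (c (double k i + s - 1)) (c (double k i + s + 1)) := by
    obtain ⟨s, hs⟩ : ∃ s, G.Adj (c (s - 1)) (c (s + 1)) := by
      rcases adj_or_adj_of_isCycleEmb hG (by omega) hc hns 0 with h | h
      · exact ⟨0, h⟩
      · exact ⟨1, by simpa [one_add_one_eq_two] using h⟩
    refine ⟨s, fun i => ?_⟩
    rw [← natCast_zmod_val i]
    induction i.val with
    | zero => simpa using hs
    | succ n ih =>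
      have := adj_add_two_of_adj hG (by omega) hc hns (by simpa using ih)
      rw [Nat.cast_succ, double_add_one]
      convert this using 2 <;> ring
  have hpar (i a : ZMod k) : parity k (double k i + s) ≠ parity k (double k a + s - 1) := by
    rw [map_sub, map_add, map_add, parity_double, parity_double, map_one]
    generalize parity k s = b
    revert b
    decide
  refine ⟨fun i => c (double k i + s - 1), fun i => c (double k i + s),
    hc.1.comp fun i j hij => double_injective (by simpa using hij), fun i => ?_, fun i => ?_,
    fun i => ?_, fun i a _ _ hia => hpar i a (congrArg _ (hc.1 hia)), fun i a hai hai' hia => ?_⟩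
  · simpa [double_add_one, show double k i + 2 + s - 1 = double k i + s + 1 by ring] using hs i
  · simpa using (hc.2 (double k i + s - 1)).symm
  · simpa [double_add_one, show double k i + 2 + s - 1 = double k i + s + 1 by ring]
      using hc.2 (double k i + s)
  rcases eq_add_one_or_of_adj_of_parity_ne hns hia (hpar i a) with h | h
  · exact hai' (double_injective (by rw [double_add_one]; linear_combination h))
  · exact hai (double_injective (by linear_combination -h))

end EvenCycle

theorem stronglyChordal_iff_chordal_and_not_hasSun :
    G.StronglyChordal ↔ G.Chordal ∧ ¬ G.HasSun := by
  refine ⟨fun hG => ⟨hG.1, fun ⟨k, hk, w, u, h⟩ => hG.not_isSun hk h⟩,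
    fun ⟨hG, hsun⟩ => ⟨hG, ?_⟩⟩
  rintro n hn ⟨k, rfl⟩ c hc
  by_contra! hns
  have : NeZero k := ⟨by omega⟩
  obtain ⟨w, u, h⟩ := hG.exists_isSun (by omega) hc hns
  exact hsun ⟨k, by omega, w, u, h⟩

theorem cliqueMatrix_totallyBalanced_iff [Fintype V] :
    TotallyBalanced G.cliqueMatrix ↔ ¬ G.HasSpecialCycle := by
  refine (totallyBalanced_iff_not_exists_cyclic
    (P := fun (v : V) (K : {S // G.IsMaxClique S}) => v ∈ K.1)).trans (not_congr ⟨?_, ?_⟩)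
  · rintro ⟨m, hm, v, K, hv, hK⟩
    exact ⟨m, hm, v, fun j => (K j).1, hv, fun j => (K j).2, hK⟩
  · rintro ⟨m, hm, v, K, h⟩
    exact ⟨m, hm, v, fun j => ⟨K j, h.isMaxClique j⟩, h.injective, h.mem_iff⟩

theorem hasSpecialCycle_iff : G.HasSpecialCycle ↔ ¬ G.Chordal ∨ G.HasSun := by
  refine ⟨fun h => or_iff_not_imp_left.2 fun hG => h.hasSun (not_not.1 hG), ?_⟩
  rintro (h | h)
  exacts [hasSpecialCycle_of_not_chordal h, h.hasSpecialCycle]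

end SimpleGraph

/-- Farber: a finite simple graph is strongly chordal iff its clique matrix is
totally balanced. -/
theorem stronglyChordal_iff_cliqueMatrix_totallyBalanced {V : Type*} [Fintype V]
    (G : SimpleGraph V) :
    G.StronglyChordal ↔ TotallyBalanced G.cliqueMatrix := by
  rw [SimpleGraph.stronglyChordal_iff_chordal_and_not_hasSun,
    SimpleGraph.cliqueMatrix_totallyBalanced_iff, SimpleGraph.hasSpecialCycle_iff]
  tauto
end
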